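/- arXiv:2303.09980 — 3 statements merged into one kernel-verified Lean document; each statement's English description precedes it below -/
import Mathlib

section
/- Assume λ(t)ε(t) → 0 as t → ∞. Then x_{ε(t),λ(t)} converges strongly to x* = proj_{argmin Φ}(0), i.e. lim_{t → ∞} ‖x_{ε(t),λ(t)} − x*‖ = 0. -/
open Filter MeasureTheory Set
open scoped RealInnerProductSpace

private lemma sq_smul_norm {H : Type*} [NormedAddCommGroup H] [InnerProductSpace ℝ H]
    (r : ℝ) (v : H) : ‖r • v‖^2 = r^2 * ‖v‖^2 := by
  rw [norm_smul, mul_pow, Real.norm_eq_abs, sq_abs]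

private lemma quad_id {H : Type*} [NormedAddCommGroup H] [InnerProductSpace ℝ H]
    (l e : ℝ) (hl : 0 < l) (he : 0 < e) (a P : H) :
    (2*l)⁻¹*‖a-P‖^2 + e*‖a‖^2/2 =
      (2*l)⁻¹*‖(1+l*e)⁻¹ • P - P‖^2 + e*‖(1+l*e)⁻¹ • P‖^2/2
        + ((1+l*e)/(2*l))*‖a - (1+l*e)⁻¹ • P‖^2 := by
  have hc : (0:ℝ) < 1 + l*e := by nlinarith
  have h1 : ‖a - P‖^2 = ‖a‖^2 - 2*⟪a,P⟫ + ‖P‖^2 := norm_sub_sq_real a P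
  have h2 : ‖a - (1+l*e)⁻¹ • P‖^2
      = ‖a‖^2 - 2*((1+l*e)⁻¹*⟪a,P⟫) + ((1+l*e)⁻¹)^2*‖P‖^2 := by
    rw [norm_sub_sq_real, real_inner_smul_right, sq_smul_norm]
  have h3 : ‖(1+l*e)⁻¹ • P - P‖^2 = ((1+l*e)⁻¹ - 1)^2 * ‖P‖^2 := by
    rw [show (1+l*e)⁻¹ • P - P = ((1+l*e)⁻¹ - 1) • P by rw [sub_smul, one_smul], sq_smul_norm]
  rw [h1, h2, h3, sq_smul_norm]
  field_simp
  ring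

private lemma le_of_forall_lin {r L K : ℝ} (hK : 0 ≤ K)
    (h : ∀ θ:ℝ, 0 < θ → θ ≤ 1 → L ≤ r + θ*K) : L ≤ r := by
  refine le_of_forall_pos_le_add fun δ hδ => ?_
  rcases eq_or_lt_of_le hK with h0 | h0
  · have := h 1 one_pos le_rfl; nlinarith
  · have hθ : 0 < min 1 (δ/K) := lt_min one_pos (div_pos hδ h0)
    have h1 := h _ hθ (min_le_left _ _)
    have h2 : min 1 (δ/K) * K ≤ δ := by
      have : min 1 (δ/K) * K ≤ (δ/K)*K :=
        mul_le_mul_of_nonneg_right (min_le_right _ _) hK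
      calc min 1 (δ/K) * K ≤ (δ/K)*K := this
        _ = δ := by field_simp
    linarith

private lemma et_eq {l e : ℝ} (he : 0 < e) : e/(1+l*e) = (e⁻¹+l)⁻¹ := by
  rw [show e⁻¹+l = (1+l*e)/e by field_simp, inv_div]

private lemma div_step {l e θ r f A B C : ℝ} (hl : 0 < l) (hθ : 0 < θ)
    (h : f + (2*l)⁻¹*A ≤ θ*r + (1-θ)*f + (2*l)⁻¹*(A - 2*(θ*(-(l*e)*B)) + θ^2*C)) :
    f - e*B ≤ r + θ*((2*l)⁻¹*C) := by
  have e1 : (2*l)⁻¹*(A - 2*(θ*(-(l*e)*B)) + θ^2*C)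
      = (2*l)⁻¹*A + θ*(e*B) + θ^2*((2*l)⁻¹*C) := by
    field_simp
    ring
  rw [e1] at h
  have h2 : θ*(f - e*B) ≤ θ*(r + θ*((2*l)⁻¹*C)) := by ring_nf; ring_nf at h; linarith
  have h3 := (mul_le_mul_iff_right₀ hθ).mp h2
  linarith

set_option maxHeartbeats 2000000 in
theorem stmt4
    {H : Type*} [NormedAddCommGroup H] [InnerProductSpace ℝ H] [CompleteSpace H]
    (Φ : H → EReal)
    (hproper : ∃ y, Φ y ≠ ⊤) (hnebot : ∀ y, Φ y ≠ ⊥)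
    (hconv : ∀ x y : H, ∀ θ : ℝ, 0 ≤ θ → θ ≤ 1 →
      Φ (θ • x + (1 - θ) • y) ≤ (θ : EReal) * Φ x + ((1 - θ : ℝ) : EReal) * Φ y)
    (hlsc : LowerSemicontinuous Φ)
    (S : Set H) (hS : S = {z | ∀ y, Φ z ≤ Φ y}) (hSne : S.Nonempty)
    (Φstar : ℝ) (hΦstar : ∀ z ∈ S, Φ z = (Φstar : EReal))
    (prox : ℝ → H → H)
    (hprox : ∀ l : ℝ, 0 < l → ∀ x y : H,
      Φ (prox l x) + (((2 * l)⁻¹ * ‖x - prox l x‖ ^ 2 : ℝ) : EReal)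
        ≤ Φ y + (((2 * l)⁻¹ * ‖x - y‖ ^ 2 : ℝ) : EReal))
    (hprox_unique : ∀ l : ℝ, 0 < l → ∀ x y : H,
      (∀ z : H, Φ y + (((2 * l)⁻¹ * ‖x - y‖ ^ 2 : ℝ) : EReal)
        ≤ Φ z + (((2 * l)⁻¹ * ‖x - z‖ ^ 2 : ℝ) : EReal)) → y = prox l x)
    (M : ℝ → H → ℝ)
    (hM : ∀ l : ℝ, 0 < l → ∀ x : H,
      (M l x : EReal) = Φ (prox l x) + (((2 * l)⁻¹ * ‖x - prox l x‖ ^ 2 : ℝ) : EReal))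
    (t₀ : ℝ) (ht₀ : 0 < t₀)
    (lam eps lam' eps' : ℝ → ℝ)
    (hlam_pos : ∀ t, t₀ ≤ t → 0 < lam t)
    (heps_pos : ∀ t, t₀ ≤ t → 0 < eps t)
    (hlam_deriv : ∀ t, t₀ ≤ t → HasDerivAt lam (lam' t) t)
    (heps_deriv : ∀ t, t₀ ≤ t → HasDerivAt eps (eps' t) t)
    (hlam'_cont : ContinuousOn lam' (Ici t₀))
    (heps'_cont : ContinuousOn eps' (Ici t₀))
    (hlam_mono : ∀ s t, t₀ ≤ s → s ≤ t → lam s ≤ lam t)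
    (heps_anti : ∀ s t, t₀ ≤ s → s ≤ t → eps t ≤ eps s)
    (heps_lim : Tendsto eps atTop (nhds 0))
    (xmin : ℝ → H)
    (hxmin : ∀ t, t₀ ≤ t → ∀ y : H,
      M (lam t) (xmin t) + eps t * ‖xmin t‖ ^ 2 / 2 ≤ M (lam t) y + eps t * ‖y‖ ^ 2 / 2)
    (xstar : H) (hxstar : xstar ∈ S) (hxstar_min : ∀ z ∈ S, ‖xstar‖ ≤ ‖z‖)
    (hA0 : Tendsto (fun t => lam t * eps t) atTop (nhds 0))
    : Tendsto (fun t => ‖xmin t - xstar‖) atTop (nhds 0) := by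
  set p : ℝ → H := fun t => prox (lam t) (xmin t) with hpdef
  set φp : ℝ → ℝ :=
    fun t => M (lam t) (xmin t) - (2*lam t)⁻¹*‖xmin t - p t‖^2 with hφpdef
  -- Φstar is a lower bound
  have hΦlb : ∀ y, (Φstar : EReal) ≤ Φ y := by
    intro y
    have hx' : ∀ y, Φ xstar ≤ Φ y := by
      have := hxstar; rw [hS] at this; exact this
    rw [← hΦstar xstar hxstar]; exact hx' y
  -- the Moreau value is real at p t
  have hPf : ∀ t, t₀ ≤ t → Φ (p t) = ((φp t : ℝ) : EReal) := by
    intro t ht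
    have hl := hlam_pos t ht
    have h := hM (lam t) hl (xmin t)
    have htop : Φ (p t) ≠ ⊤ := by
      intro habs
      rw [hpdef] at habs
      simp only [habs] at h
      rw [EReal.top_add_coe] at h
      exact EReal.coe_ne_top _ h
    obtain ⟨v, hv⟩ : ∃ v:ℝ, Φ (p t) = (v:EReal) :=
      ⟨(Φ (p t)).toReal, (EReal.coe_toReal htop (hnebot _)).symm⟩
    have hv' : Φ (prox (lam t) (xmin t)) = (v:EReal) := hv
    rw [hv'] at h
    have : M (lam t) (xmin t) = v + (2*lam t)⁻¹*‖xmin t - p t‖^2 := by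
      rw [← EReal.coe_add] at h
      exact_mod_cast h
    rw [hv, hφpdef]
    norm_num [this]
  have hφlb : ∀ t, t₀ ≤ t → Φstar ≤ φp t := by
    intro t ht
    have := hΦlb (p t)
    rw [hPf t ht] at this
    exact_mod_cast this
  -- Step 1 : xmin t = (1 + lam t * eps t)⁻¹ • p t
  have hxp : ∀ t, t₀ ≤ t → xmin t = (1 + lam t * eps t)⁻¹ • p t := by
    intro t ht
    have hl := hlam_pos t ht
    have he := heps_pos t ht
    have hc : (0:ℝ) < 1 + lam t * eps t := by nlinarith
    set x' : H := (1 + lam t * eps t)⁻¹ • p t with hx'def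
    -- M at x' is at most the value with candidate p t
    have hMx' : M (lam t) x' ≤ φp t + (2*lam t)⁻¹*‖x' - p t‖^2 := by
      have h1 := hM (lam t) hl x'
      have h2 := hprox (lam t) hl x' (p t)
      rw [← h1, hPf t ht, ← EReal.coe_add] at h2
      exact_mod_cast h2
    have hMx : M (lam t) (xmin t) = φp t + (2*lam t)⁻¹*‖xmin t - p t‖^2 := by
      rw [hφpdef]; ring
    have hmin := hxmin t ht x'
    rw [hMx] at hmin
    have hkey : (2*lam t)⁻¹*‖xmin t - p t‖^2 + eps t*‖xmin t‖^2/2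
        ≤ (2*lam t)⁻¹*‖x' - p t‖^2 + eps t*‖x'‖^2/2 := by linarith
    have hq := quad_id (lam t) (eps t) hl he (xmin t) (p t)
    rw [← hx'def] at hq
    have hz : ((1 + lam t*eps t)/(2*lam t))*‖xmin t - x'‖^2 ≤ 0 := by linarith
    have hpos : (0:ℝ) < (1 + lam t*eps t)/(2*lam t) := by positivity
    have : ‖xmin t - x'‖^2 ≤ 0 := by
      by_contra hcon
      push_neg at hcon
      nlinarith
    have : ‖xmin t - x'‖ = 0 := by nlinarith [norm_nonneg (xmin t - x'), sq_nonneg ‖xmin t - x'‖]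
    have := norm_sub_eq_zero_iff.mp this
    exact this
  -- Step 2 : exact subgradient inequality at p t
  have hsub : ∀ t, t₀ ≤ t → ∀ (y : H) (r : ℝ), Φ y = (r:EReal) →
      φp t - (eps t/(1 + lam t*eps t)) * ⟪p t, y - p t⟫ ≤ r := by
    intro t ht y r hyr
    have hl := hlam_pos t ht
    have he := heps_pos t ht
    have hc : (0:ℝ) < 1 + lam t * eps t := by nlinarith
    -- rewrite the tilde-eps inner product via xmin
    have hip : (eps t/(1 + lam t*eps t)) * ⟪p t, y - p t⟫ = eps t * ⟪xmin t, y - p t⟫ := by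
      rw [hxp t ht, real_inner_smul_left]
      field_simp
    rw [hip]
    have hK : 0 ≤ (2*lam t)⁻¹*‖y - p t‖^2 := by positivity
    refine le_of_forall_lin hK ?_
    intro θ hθ0 hθ1
    have hcv := hconv y (p t) θ hθ0.le hθ1
    rw [hyr, hPf t ht] at hcv
    have hcv' : Φ (θ • y + (1-θ) • p t) ≤ ((θ*r + (1-θ)*(φp t) : ℝ) : EReal) := by
      push_cast
      exact hcv
    have hpx := hprox (lam t) hl (xmin t) (θ • y + (1-θ) • p t)
    rw [← hM (lam t) hl (xmin t)] at hpx
    have hchain : ((M (lam t) (xmin t) : ℝ) : EReal)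
        ≤ ((θ*r + (1-θ)*(φp t) + (2*lam t)⁻¹*‖xmin t - (θ • y + (1-θ) • p t)‖^2 : ℝ) : EReal) := by
      refine le_trans hpx ?_
      push_cast
      exact add_le_add_left hcv' _
    have hre : M (lam t) (xmin t)
        ≤ θ*r + (1-θ)*(φp t) + (2*lam t)⁻¹*‖xmin t - (θ • y + (1-θ) • p t)‖^2 := by
      exact_mod_cast hchain
    have hMx : M (lam t) (xmin t) = φp t + (2*lam t)⁻¹*‖xmin t - p t‖^2 := by
      rw [hφpdef]; ring
    -- expand the norm
    have hdiff : xmin t - (θ • y + (1-θ) • p t) = (xmin t - p t) - θ • (y - p t) := by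
      rw [sub_smul, one_smul, smul_sub]
      abel
    have hexp : ‖xmin t - (θ • y + (1-θ) • p t)‖^2
        = ‖xmin t - p t‖^2 - 2*(θ*⟪xmin t - p t, y - p t⟫) + θ^2*‖y - p t‖^2 := by
      rw [hdiff, norm_sub_sq_real, real_inner_smul_right, sq_smul_norm]
    -- inner product via the identity x - p = -(λ ε) x
    have hxmp : xmin t - p t = -(lam t * eps t) • xmin t := by
      have h1 : p t = (1 + lam t*eps t) • xmin t := by
        rw [hxp t ht, smul_smul]
        rw [mul_inv_cancel₀ hc.ne', one_smul]
      rw [h1, neg_smul]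
      rw [show (1 + lam t*eps t) • xmin t = xmin t + (lam t*eps t) • xmin t by
        rw [add_smul, one_smul]]
      abel
    have hinner : ⟪xmin t - p t, y - p t⟫ = -(lam t*eps t) * ⟪xmin t, y - p t⟫ := by
      rw [hxmp, real_inner_smul_left]
    rw [hexp, hinner] at hre
    rw [hMx] at hre
    -- divide by θ
    exact div_step hl hθ0 hre
  set et : ℝ → ℝ := fun t => eps t/(1 + lam t*eps t) with hetdef
  have hcpos : ∀ t, t₀ ≤ t → (0:ℝ) < 1 + lam t*eps t := by
    intro t ht
    nlinarith [hlam_pos t ht, heps_pos t ht]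
  have het_pos : ∀ t, t₀ ≤ t → 0 < et t :=
    fun t ht => div_pos (heps_pos t ht) (hcpos t ht)
  have het_le : ∀ t, t₀ ≤ t → et t ≤ eps t := by
    intro t ht
    have he := heps_pos t ht
    have h1 : et t = ((eps t)⁻¹ + lam t)⁻¹ := et_eq he
    have h2 : ((eps t)⁻¹ + lam t)⁻¹ ≤ ((eps t)⁻¹)⁻¹ :=
      inv_anti₀ (inv_pos.mpr he) (by linarith [hlam_pos t ht])
    rw [inv_inv] at h2
    rw [h1]
    exact h2
  have het_anti : ∀ s t, t₀ ≤ s → s ≤ t → et t ≤ et s := by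
    intro s t hs hst
    have ht' : t₀ ≤ t := le_trans hs hst
    have hes := heps_pos s hs
    have het' := heps_pos t ht'
    have h1 : et s = ((eps s)⁻¹ + lam s)⁻¹ := et_eq hes
    have h2 : et t = ((eps t)⁻¹ + lam t)⁻¹ := et_eq het'
    rw [h1, h2]
    have h3 : (eps s)⁻¹ + lam s ≤ (eps t)⁻¹ + lam t := by
      have := hlam_mono s t hs hst
      have h4 : (eps s)⁻¹ ≤ (eps t)⁻¹ := inv_anti₀ het' (heps_anti s t hs hst)
      linarith
    have h5 : (0:ℝ) < (eps s)⁻¹ + lam s := by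
      have := hlam_pos s hs
      positivity
    exact inv_anti₀ h5 h3
  -- (a) : inner product inequality against minimizers
  have haa : ∀ t, t₀ ≤ t → ∀ z ∈ S, 0 ≤ ⟪p t, z - p t⟫ ∧ φp t ≤ Φstar + et t * ⟪p t, z - p t⟫ := by
    intro t ht z hz
    have h := hsub t ht z Φstar (hΦstar z hz)
    have heq : eps t/(1 + lam t*eps t) = et t := rfl
    rw [heq] at h
    have hlb := hφlb t ht
    have het := het_pos t ht
    have hI : 0 ≤ ⟪p t, z - p t⟫ := by nlinarith
    exact ⟨hI, by linarith⟩
  have hsub2 : ∀ t, t₀ ≤ t → ∀ (y : H) (r : ℝ), Φ y = (r:EReal) →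
      φp t - et t * ⟪p t, y - p t⟫ ≤ r := hsub
  clear_value p φp et
  have hbdd : ∀ t, t₀ ≤ t → ‖p t‖ ≤ ‖xstar‖ := by
    intro t ht
    have h := (haa t ht xstar hxstar).1
    have hsplit : ⟪p t, xstar - p t⟫ = ⟪p t, xstar⟫ - ‖p t‖^2 := by
      rw [inner_sub_right, real_inner_self_eq_norm_sq]
    rw [hsplit] at h
    have h3 : ⟪p t, xstar⟫ ≤ ‖p t‖ * ‖xstar‖ := real_inner_le_norm _ _
    nlinarith only [h, h3, norm_nonneg (p t), norm_nonneg xstar]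
  -- (b) : monotonicity of the Tikhonov-like path
  have hb : ∀ s t, t₀ ≤ s → s ≤ t → ‖p s - p t‖^2 ≤ ‖p t‖^2 - ‖p s‖^2 := by
    intro s t hs hst
    have ht' := le_trans hs hst
    have h1 := hsub2 s hs (p t) (φp t) (hPf t ht')
    have h2 := hsub2 t ht' (p s) (φp s) (hPf s hs)
    have e1 : ⟪p s, p t - p s⟫ = -⟪p s, p s - p t⟫ := by
      rw [show p t - p s = -(p s - p t) by abel, inner_neg_right]
    rw [e1] at h1
    set a := ⟪p s, p s - p t⟫ with hadef
    set b := ⟪p t, p s - p t⟫ with hbdef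
    have hmono : et s * a ≤ et t * b := by linarith
    have hns : ‖p s - p t‖^2 = a - b := by
      rw [hadef, hbdef, ← inner_sub_left, real_inner_self_eq_norm_sq]
    have ha' : a = ‖p s‖^2 - ⟪p s, p t⟫ := by
      rw [hadef, inner_sub_right, real_inner_self_eq_norm_sq]
    have hb' : b = ⟪p s, p t⟫ - ‖p t‖^2 := by
      rw [hbdef, inner_sub_right, real_inner_self_eq_norm_sq, real_inner_comm]
    have hets := het_pos s hs
    have hett := het_pos t ht'
    have hanti := het_anti s t hs hst
    have ha0 : a ≤ 0 := by
      rcases le_or_gt b 0 with hble | hbgt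
      · nlinarith only [hmono, hets, hett, hble]
      · exfalso
        have hab : a ≤ b := by nlinarith only [hmono, hets, hett, hanti, hbgt]
        have hba : b ≤ a := by nlinarith only [hns, sq_nonneg ‖p s - p t‖, norm_nonneg (p s - p t)]
        have hd0 : ‖p s - p t‖^2 = 0 := by linarith
        have : p s - p t = 0 := by
          have := (pow_eq_zero_iff (n := 2) (by norm_num)).mp hd0
          exact norm_eq_zero.mp this
        rw [hbdef] at hbgt
        rw [this, inner_zero_right] at hbgt
        exact lt_irrefl 0 hbgt
    nlinarith only [hns, ha', hb', ha0]
  -- Cauchy property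
  have hbddR : BddAbove ((fun t => ‖p t‖^2) '' Ici t₀) := by
    refine ⟨‖xstar‖^2, ?_⟩
    rintro _ ⟨t, ht, rfl⟩
    have h := hbdd t ht
    simp only []
    nlinarith only [h, norm_nonneg (p t)]
  have hne : ((fun t => ‖p t‖^2) '' Ici t₀).Nonempty := ⟨_, ⟨t₀, mem_Ici.mpr le_rfl, rfl⟩⟩
  have hcauchy : CauchySeq p := by
    rw [Metric.cauchySeq_iff]
    intro δ hδ
    set L := sSup ((fun t => ‖p t‖^2) '' Ici t₀) with hLdef
    have hLlt : L - δ^2/2 < L := by nlinarith only [hδ]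
    obtain ⟨_, ⟨s₀, hs₀, rfl⟩, hgt⟩ := exists_lt_of_lt_csSup hne hLlt
    refine ⟨s₀, ?_⟩
    have key : ∀ m n, s₀ ≤ m → m ≤ n → dist (p m) (p n) < δ := by
      intro m n hm hmn
      have hmt : t₀ ≤ m := le_trans hs₀ hm
      have hnt : t₀ ≤ n := le_trans hmt hmn
      have h1 := hb m n hmt hmn
      have h2 : ‖p n‖^2 ≤ L := le_csSup hbddR ⟨n, mem_Ici.mpr hnt, rfl⟩
      have h3 := hb s₀ m hs₀ hm
      have h4 : 0 ≤ ‖p s₀ - p m‖^2 := sq_nonneg _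
      rw [dist_eq_norm]
      nlinarith only [h1, h2, h3, h4, hgt, hδ, norm_nonneg (p m - p n)]
    intro m hm n hn
    rcases le_total m n with h | h
    · exact key m n hm h
    · rw [dist_comm]; exact key n m hn h
  obtain ⟨u, hu⟩ := cauchySeq_tendsto_of_complete hcauchy
  -- the Moreau values converge to Φstar
  have hφlim : Filter.Tendsto φp Filter.atTop (nhds Φstar) := by
    have hup : Filter.Tendsto (fun t => Φstar + 2*‖xstar‖^2 * eps t) Filter.atTop
        (nhds (Φstar + 2*‖xstar‖^2 * 0)) :=
      tendsto_const_nhds.add (tendsto_const_nhds.mul heps_lim)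
    rw [mul_zero, add_zero] at hup
    refine tendsto_of_tendsto_of_tendsto_of_le_of_le' tendsto_const_nhds hup ?_ ?_
    · filter_upwards [eventually_ge_atTop t₀] with t ht
      exact hφlb t ht
    · filter_upwards [eventually_ge_atTop t₀] with t ht
      obtain ⟨hI0, hIle⟩ := haa t ht xstar hxstar
      have hIub : ⟪p t, xstar - p t⟫ ≤ 2*‖xstar‖^2 := by
        have c1 := real_inner_le_norm (p t) (xstar - p t)
        have c2 : ‖xstar - p t‖ ≤ ‖xstar‖ + ‖p t‖ := norm_sub_le _ _
        have c3 := hbdd t ht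
        nlinarith only [c1, c2, c3, norm_nonneg (p t), norm_nonneg xstar, norm_nonneg (xstar - p t)]
      have hmul : et t * ⟪p t, xstar - p t⟫ ≤ eps t * (2*‖xstar‖^2) := by
        have d1 := het_le t ht
        have d2 := het_pos t ht
        have d3 := heps_pos t ht
        nlinarith only [hI0, hIub, d1, d2, d3]
      linarith
  -- the limit point is a minimizer
  have huS : u ∈ S := by
    rw [hS]
    intro y
    by_contra hcon
    push_neg at hcon
    have h1 : (Φstar : EReal) < Φ u := lt_of_le_of_lt (hΦlb y) hcon
    obtain ⟨c, hc1, hc2⟩ := EReal.exists_between_coe_real h1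
    have hev1 : ∀ᶠ w in nhds u, (c:EReal) < Φ w := hlsc u (c:EReal) hc2
    have hev2 : ∀ᶠ t in Filter.atTop, (c:EReal) < Φ (p t) := hu.eventually hev1
    have hev3 : ∀ᶠ t in Filter.atTop, c < φp t := by
      filter_upwards [hev2, eventually_ge_atTop t₀] with t h2 ht
      rw [hPf t ht] at h2
      exact_mod_cast h2
    have hclt : Φstar < c := by exact_mod_cast hc1
    have hev4 : ∀ᶠ t in Filter.atTop, φp t < c := hφlim.eventually_lt_const hclt
    obtain ⟨t, h3, h4⟩ := (hev3.and hev4).exists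
    linarith
  -- the limit point is xstar
  have hux : u = xstar := by
    have h1 : ‖xstar‖ ≤ ‖u‖ := hxstar_min u huS
    have htend : Filter.Tendsto (fun t => ⟪p t, xstar - p t⟫) Filter.atTop
        (nhds ⟪u, xstar - u⟫) := hu.inner (tendsto_const_nhds.sub hu)
    have h2 : 0 ≤ ⟪u, xstar - u⟫ := by
      refine ge_of_tendsto htend ?_
      filter_upwards [eventually_ge_atTop t₀] with t ht
      exact (haa t ht xstar hxstar).1
    have h3 : ⟪u, xstar⟫ - ‖u‖^2 ≥ 0 := by
      have e1 : ⟪u, xstar - u⟫ = ⟪u, xstar⟫ - ‖u‖^2 := by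
        rw [inner_sub_right, real_inner_self_eq_norm_sq]
      linarith [e1 ▸ h2]
    have h4 : ‖u - xstar‖^2 ≤ 0 := by
      rw [norm_sub_sq_real]
      nlinarith only [h1, h3, norm_nonneg u, norm_nonneg xstar]
    have h5 : ‖u - xstar‖ = 0 := by
      nlinarith only [h4, norm_nonneg (u - xstar), sq_nonneg ‖u - xstar‖]
    exact sub_eq_zero.mp (norm_eq_zero.mp h5)
  -- conclusion
  have hc1 : Filter.Tendsto (fun t => (1 + lam t*eps t)⁻¹) Filter.atTop (nhds 1) := by
    have h1 : Filter.Tendsto (fun t => 1 + lam t*eps t) Filter.atTop (nhds (1+0)) :=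
      tendsto_const_nhds.add hA0
    rw [add_zero] at h1
    have h2 := h1.inv₀ (by norm_num)
    rw [inv_one] at h2
    exact h2
  have hsm : Filter.Tendsto (fun t => (1 + lam t*eps t)⁻¹ • p t) Filter.atTop
      (nhds ((1:ℝ) • u)) := hc1.smul hu
  rw [one_smul, hux] at hsm
  have hxlim : Filter.Tendsto xmin Filter.atTop (nhds xstar) := by
    refine Filter.Tendsto.congr' ?_ hsm
    filter_upwards [eventually_ge_atTop t₀] with t ht
    exact (hxp t ht).symm
  exact tendsto_iff_norm_sub_tendsto_zero.mp hxlim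
end

section
/- Let x : [t₀, ∞) → H be a solution of (S). Then for every t ≥ t₀: ‖prox_{λ(t)Φ}(x(t)) − x(t)‖² ≤ 2λ(t)E(t) + λ(t)ε(t)‖x*‖². -/
open Filter MeasureTheory Set

theorem stmt10
    {H : Type*} [NormedAddCommGroup H] [InnerProductSpace ℝ H] [CompleteSpace H]
    (Φ : H → EReal)
    (hproper : ∃ y, Φ y ≠ ⊤) (hnebot : ∀ y, Φ y ≠ ⊥)
    (hconv : ∀ x y : H, ∀ θ : ℝ, 0 ≤ θ → θ ≤ 1 →
      Φ (θ • x + (1 - θ) • y) ≤ (θ : EReal) * Φ x + ((1 - θ : ℝ) : EReal) * Φ y)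
    (hlsc : LowerSemicontinuous Φ)
    (S : Set H) (hS : S = {z | ∀ y, Φ z ≤ Φ y}) (hSne : S.Nonempty)
    (Φstar : ℝ) (hΦstar : ∀ z ∈ S, Φ z = (Φstar : EReal))
    (prox : ℝ → H → H)
    (hprox : ∀ l : ℝ, 0 < l → ∀ x y : H,
      Φ (prox l x) + (((2 * l)⁻¹ * ‖x - prox l x‖ ^ 2 : ℝ) : EReal)
        ≤ Φ y + (((2 * l)⁻¹ * ‖x - y‖ ^ 2 : ℝ) : EReal))
    (hprox_unique : ∀ l : ℝ, 0 < l → ∀ x y : H,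
      (∀ z : H, Φ y + (((2 * l)⁻¹ * ‖x - y‖ ^ 2 : ℝ) : EReal)
        ≤ Φ z + (((2 * l)⁻¹ * ‖x - z‖ ^ 2 : ℝ) : EReal)) → y = prox l x)
    (M : ℝ → H → ℝ)
    (hM : ∀ l : ℝ, 0 < l → ∀ x : H,
      (M l x : EReal) = Φ (prox l x) + (((2 * l)⁻¹ * ‖x - prox l x‖ ^ 2 : ℝ) : EReal))
    (t₀ : ℝ) (ht₀ : 0 < t₀)
    (lam eps lam' eps' : ℝ → ℝ)
    (hlam_pos : ∀ t, t₀ ≤ t → 0 < lam t)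
    (heps_pos : ∀ t, t₀ ≤ t → 0 < eps t)
    (hlam_deriv : ∀ t, t₀ ≤ t → HasDerivAt lam (lam' t) t)
    (heps_deriv : ∀ t, t₀ ≤ t → HasDerivAt eps (eps' t) t)
    (hlam'_cont : ContinuousOn lam' (Ici t₀))
    (heps'_cont : ContinuousOn eps' (Ici t₀))
    (hlam_mono : ∀ s t, t₀ ≤ s → s ≤ t → lam s ≤ lam t)
    (heps_anti : ∀ s t, t₀ ≤ s → s ≤ t → eps t ≤ eps s)
    (heps_lim : Tendsto eps atTop (nhds 0))
    (xmin : ℝ → H)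
    (hxmin : ∀ t, t₀ ≤ t → ∀ y : H,
      M (lam t) (xmin t) + eps t * ‖xmin t‖ ^ 2 / 2 ≤ M (lam t) y + eps t * ‖y‖ ^ 2 / 2)
    (xstar : H) (hxstar : xstar ∈ S) (hxstar_min : ∀ z ∈ S, ‖xstar‖ ≤ ‖z‖)
    (α β : ℝ) (hα : 0 < α) (hβ : 0 < β)
    (γ : ℝ) (hγ1 : α / 2 ≤ γ) (hγ2 : γ < α)
    (x : ℝ → H)
    (hx1 : ∀ t, t₀ ≤ t → DifferentiableAt ℝ x t)
    (hx2 : ∀ t, t₀ ≤ t → DifferentiableAt ℝ (deriv x) t)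
    (hGdiff : ∀ t, t₀ ≤ t →
      DifferentiableAt ℝ (fun s => (lam s)⁻¹ • (x s - prox (lam s) (x s))) t)
    (hode : ∀ t, t₀ ≤ t →
      deriv (deriv x) t + (α * Real.sqrt (eps t)) • deriv x t
        + β • deriv (fun s => (lam s)⁻¹ • (x s - prox (lam s) (x s))) t
        + (lam t)⁻¹ • (x t - prox (lam t) (x t)) + eps t • x t = 0)
    (E : ℝ → ℝ)
    (hE : ∀ t, E t =
      (M (lam t) (x t) + eps t * ‖x t‖ ^ 2 / 2)
        - (M (lam t) (xmin t) + eps t * ‖xmin t‖ ^ 2 / 2)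
        + (1 / 2) * ‖(γ * Real.sqrt (eps t)) • (x t - xmin t) + deriv x t
            + β • ((lam t)⁻¹ • (x t - prox (lam t) (x t)))‖ ^ 2)
    : ∀ t, t₀ ≤ t →
      ‖prox (lam t) (x t) - x t‖ ^ 2 ≤ 2 * lam t * E t + lam t * eps t * ‖xstar‖ ^ 2 := by

  intro t ht
  have hl := hlam_pos t ht
  have hlne : lam t ≠ 0 := ne_of_gt hl
  have hxsS : ∀ y, Φ xstar ≤ Φ y := by rw [hS] at hxstar; exact hxstar
  have hΦxs : Φ xstar = (Φstar : EReal) := hΦstar xstar hxstar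
  set l := lam t with hldef
  set n : ℝ := ‖x t - prox l (x t)‖ ^ 2 with hndef
  set c : ℝ := (2 * l)⁻¹ * n with hcdef
  have h1 : Φstar + c ≤ M l (x t) := by
    have h : ((Φstar + c : ℝ) : EReal) ≤ (M l (x t) : EReal) := by
      rw [EReal.coe_add, hM l hl (x t)]
      exact add_le_add_left (hΦxs ▸ hxsS (prox l (x t))) _
    exact_mod_cast h
  have h2 : M l xstar ≤ Φstar := by
    have h := hprox l hl xstar xstar
    have h' : (M l xstar : EReal) ≤ (Φstar : EReal) := by
      rw [hM l hl xstar]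
      simpa [hΦxs, sub_self] using h
    exact_mod_cast h'
  have h3 := hxmin t ht xstar
  have hEt := hE t
  have hC : 0 ≤ (1 / 2) * ‖(γ * Real.sqrt (eps t)) • (x t - xmin t) + deriv x t
      + β • ((lam t)⁻¹ • (x t - prox (lam t) (x t)))‖ ^ 2 := by positivity
  have he := heps_pos t ht
  have hx2 : 0 ≤ eps t * ‖x t‖ ^ 2 / 2 := by positivity
  have hEge : c - eps t * ‖xstar‖ ^ 2 / 2 ≤ E t := by
    rw [hEt]; linarith
  have hmul : 0 ≤ 2 * l * (E t - (c - eps t * ‖xstar‖ ^ 2 / 2)) := by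
    apply mul_nonneg (by linarith) (by linarith)
  have hcl : 2 * l * c = n := by
    rw [hcdef]; field_simp
  have hrev : ‖prox (lam t) (x t) - x t‖ ^ 2 = n := by
    rw [hndef, norm_sub_rev]
  rw [hrev]
  nlinarith [hmul, hcl]
end

section
/- Let x : [t₀, ∞) → H be a solution of (S). Then for every t ≥ t₀: ‖x(t) − x_{ε(t),λ(t)}‖² ≤ 2E(t)/ε(t). Consequently, if λ(t)ε(t) → 0 and E(t)/ε(t) → 0 as t → ∞, then x(t) converges strongly to x* = proj_{argmin Φ}(0). -/
open Filter MeasureTheory Set RealInnerProductSpace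

section Aux
variable {H : Type*} [NormedAddCommGroup H] [InnerProductSpace ℝ H]

lemma theta_le (c D : ℝ) (hc : 0 ≤ c) (h : ∀ θ : ℝ, 0 < θ → θ < 1 → θ * c ≤ D) : c ≤ D := by
  by_contra hcd
  push_neg at hcd
  have h2 := h (1/2) (by norm_num) (by norm_num)
  have hc0 : 0 < c := by nlinarith
  have hlt : max (D / c) (1/2) < 1 := by
    apply max_lt _ (by norm_num)
    rw [div_lt_one hc0]; exact hcd
  obtain ⟨θ, hθa, hθb⟩ := exists_between hlt
  have hθ0 : 0 < θ := by have := lt_of_le_of_lt (le_max_right (D/c) (1/2)) hθa; linarith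
  have hgt : D / c < θ := lt_of_le_of_lt (le_max_left (D/c) (1/2)) hθa
  have : D < θ * c := by
    rw [div_lt_iff₀ hc0] at hgt; linarith
  linarith [h θ hθ0 hθb]

lemma norm_combo_sq (a b : H) (θ : ℝ) :
    ‖θ • a + (1 - θ) • b‖ ^ 2 = θ * ‖a‖ ^ 2 + (1 - θ) * ‖b‖ ^ 2 - θ * (1 - θ) * ‖a - b‖ ^ 2 := by
  have h : ∀ v : H, ‖v‖ ^ 2 = ⟪v, v⟫ := fun v => (real_inner_self_eq_norm_sq v).symm
  simp only [h, inner_add_add_self, inner_sub_sub_self, real_inner_smul_left, real_inner_smul_right]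
  ring_nf

lemma strong_min (f : H → ℝ) (e : ℝ) (he : 0 < e)
    (hf : ∀ a b : H, ∀ θ : ℝ, 0 < θ → θ < 1 →
      f (θ • a + (1 - θ) • b) ≤ θ * f a + (1 - θ) * f b)
    (m : H) (hm : ∀ y, f m + e * ‖m‖ ^ 2 / 2 ≤ f y + e * ‖y‖ ^ 2 / 2) (y : H) :
    f m + e * ‖m‖ ^ 2 / 2 + e / 2 * ‖y - m‖ ^ 2 ≤ f y + e * ‖y‖ ^ 2 / 2 := by
  have h4 : ‖y - m‖ ^ 2 = ‖m - y‖ ^ 2 := by rw [norm_sub_rev]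
  have key : e / 2 * ‖m - y‖ ^ 2 ≤ (f y + e * ‖y‖ ^ 2 / 2) - (f m + e * ‖m‖ ^ 2 / 2) := by
    apply theta_le _ _ (by positivity)
    intro θ hθ0 hθ1
    have h1 := hm (θ • m + (1 - θ) • y)
    have h2 := hf m y θ hθ0 hθ1
    rw [norm_combo_sq m y θ] at h1
    have h12 : f m + e * ‖m‖ ^ 2 / 2 ≤ θ * f m + (1 - θ) * f y
        + e * (θ * ‖m‖ ^ 2 + (1 - θ) * ‖y‖ ^ 2 - θ * (1 - θ) * ‖m - y‖ ^ 2) / 2 := by linarith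
    have h6 : 0 < 1 - θ := by linarith
    have h7 : (1 - θ) * (θ * (e / 2 * ‖m - y‖ ^ 2)) ≤
        (1 - θ) * ((f y + e * ‖y‖ ^ 2 / 2) - (f m + e * ‖m‖ ^ 2 / 2)) := by nlinarith [h12]
    exact (mul_le_mul_iff_right₀ h6).mp h7
  rw [h4]; linarith

lemma key_ineq (l e : ℝ) (hl : 0 < l) (he : 0 < e) (z p y : H) :
    (2*l)⁻¹ * ‖(1+l*e)⁻¹ • z - z‖^2 + e/2 * ‖(1+l*e)⁻¹ • z‖^2 ≤
      e/(1+l*e)/2 * (‖z‖^2 + ‖p-z‖^2 - ‖p‖^2) + (2*l)⁻¹ * ‖y-p‖^2 + e/2 * ‖y‖^2 := by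
  have hc : (0:ℝ) < 1 + l*e := by nlinarith
  set d : ℝ := (1+l*e)⁻¹ with hd
  have h1 : d • z - z = (d-1) • z := by rw [sub_smul, one_smul]
  have e1 : ‖d • z - z‖^2 = (d-1)^2*‖z‖^2 := by
    rw [h1, norm_smul, mul_pow, Real.norm_eq_abs, sq_abs]
  have e2 : ‖d • z‖^2 = d^2*‖z‖^2 := by
    rw [norm_smul, mul_pow, Real.norm_eq_abs, sq_abs]
  have e3 : ‖y - p‖^2 = ‖y‖^2 - 2*⟪y,p⟫ + ‖p‖^2 := norm_sub_sq_real y p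
  have e4 : ‖p - z‖^2 = ‖p‖^2 - 2*⟪p,z⟫ + ‖z‖^2 := norm_sub_sq_real p z
  have e5 : ‖(y - p) - (d-1) • z‖^2
      = ‖y‖^2 - 2*⟪y,p⟫ + ‖p‖^2 - 2*(d-1)*(⟪y,z⟫ - ⟪p,z⟫) + (d-1)^2*‖z‖^2 := by
    rw [norm_sub_sq_real (y-p) ((d-1) • z), norm_sub_sq_real y p, norm_smul, mul_pow,
      Real.norm_eq_abs, sq_abs]
    rw [real_inner_smul_right, inner_sub_left]
    ring
  have e6 : ‖y - d • z‖^2 = ‖y‖^2 - 2*d*⟪y,z⟫ + d^2*‖z‖^2 := by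
    rw [norm_sub_sq_real y (d • z), norm_smul, mul_pow, Real.norm_eq_abs, sq_abs,
      real_inner_smul_right]
    ring
  have nn1 : (0:ℝ) ≤ (2*l)⁻¹ * ‖(y - p) - (d-1) • z‖^2 := by positivity
  have nn2 : (0:ℝ) ≤ e/2 * ‖y - d • z‖^2 := by positivity
  have hed : e/(1+l*e) = e*d := by rw [hd, div_eq_mul_inv]
  have main : e*d/2 * (‖z‖^2 + ‖p-z‖^2 - ‖p‖^2) + (2*l)⁻¹ * ‖y-p‖^2 + e/2*‖y‖^2
      - ((2*l)⁻¹ * ‖d • z - z‖^2 + e/2 * ‖d • z‖^2)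
      = (2*l)⁻¹ * ‖(y - p) - (d-1) • z‖^2 + e/2 * ‖y - d • z‖^2 := by
    rw [e1, e2, e3, e4, e5, e6, hd]
    field_simp
    ring
  rw [hed]
  linarith [main, nn1, nn2]

end Aux

set_option maxHeartbeats 2000000 in
theorem stmt11
    {H : Type*} [NormedAddCommGroup H] [InnerProductSpace ℝ H] [CompleteSpace H]
    (Φ : H → EReal)
    (hproper : ∃ y, Φ y ≠ ⊤) (hnebot : ∀ y, Φ y ≠ ⊥)
    (hconv : ∀ x y : H, ∀ θ : ℝ, 0 ≤ θ → θ ≤ 1 →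
      Φ (θ • x + (1 - θ) • y) ≤ (θ : EReal) * Φ x + ((1 - θ : ℝ) : EReal) * Φ y)
    (hlsc : LowerSemicontinuous Φ)
    (S : Set H) (hS : S = {z | ∀ y, Φ z ≤ Φ y}) (hSne : S.Nonempty)
    (Φstar : ℝ) (hΦstar : ∀ z ∈ S, Φ z = (Φstar : EReal))
    (prox : ℝ → H → H)
    (hprox : ∀ l : ℝ, 0 < l → ∀ x y : H,
      Φ (prox l x) + (((2 * l)⁻¹ * ‖x - prox l x‖ ^ 2 : ℝ) : EReal)
        ≤ Φ y + (((2 * l)⁻¹ * ‖x - y‖ ^ 2 : ℝ) : EReal))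
    (hprox_unique : ∀ l : ℝ, 0 < l → ∀ x y : H,
      (∀ z : H, Φ y + (((2 * l)⁻¹ * ‖x - y‖ ^ 2 : ℝ) : EReal)
        ≤ Φ z + (((2 * l)⁻¹ * ‖x - z‖ ^ 2 : ℝ) : EReal)) → y = prox l x)
    (M : ℝ → H → ℝ)
    (hM : ∀ l : ℝ, 0 < l → ∀ x : H,
      (M l x : EReal) = Φ (prox l x) + (((2 * l)⁻¹ * ‖x - prox l x‖ ^ 2 : ℝ) : EReal))
    (t₀ : ℝ) (ht₀ : 0 < t₀)
    (lam eps lam' eps' : ℝ → ℝ)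
    (hlam_pos : ∀ t, t₀ ≤ t → 0 < lam t)
    (heps_pos : ∀ t, t₀ ≤ t → 0 < eps t)
    (hlam_deriv : ∀ t, t₀ ≤ t → HasDerivAt lam (lam' t) t)
    (heps_deriv : ∀ t, t₀ ≤ t → HasDerivAt eps (eps' t) t)
    (hlam'_cont : ContinuousOn lam' (Ici t₀))
    (heps'_cont : ContinuousOn eps' (Ici t₀))
    (hlam_mono : ∀ s t, t₀ ≤ s → s ≤ t → lam s ≤ lam t)
    (heps_anti : ∀ s t, t₀ ≤ s → s ≤ t → eps t ≤ eps s)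
    (heps_lim : Tendsto eps atTop (nhds 0))
    (xmin : ℝ → H)
    (hxmin : ∀ t, t₀ ≤ t → ∀ y : H,
      M (lam t) (xmin t) + eps t * ‖xmin t‖ ^ 2 / 2 ≤ M (lam t) y + eps t * ‖y‖ ^ 2 / 2)
    (xstar : H) (hxstar : xstar ∈ S) (hxstar_min : ∀ z ∈ S, ‖xstar‖ ≤ ‖z‖)
    (α β : ℝ) (hα : 0 < α) (hβ : 0 < β)
    (γ : ℝ) (hγ1 : α / 2 ≤ γ) (hγ2 : γ < α)
    (x : ℝ → H)
    (hx1 : ∀ t, t₀ ≤ t → DifferentiableAt ℝ x t)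
    (hx2 : ∀ t, t₀ ≤ t → DifferentiableAt ℝ (deriv x) t)
    (hGdiff : ∀ t, t₀ ≤ t →
      DifferentiableAt ℝ (fun s => (lam s)⁻¹ • (x s - prox (lam s) (x s))) t)
    (hode : ∀ t, t₀ ≤ t →
      deriv (deriv x) t + (α * Real.sqrt (eps t)) • deriv x t
        + β • deriv (fun s => (lam s)⁻¹ • (x s - prox (lam s) (x s))) t
        + (lam t)⁻¹ • (x t - prox (lam t) (x t)) + eps t • x t = 0)
    (E : ℝ → ℝ)
    (hE : ∀ t, E t =
      (M (lam t) (x t) + eps t * ‖x t‖ ^ 2 / 2)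
        - (M (lam t) (xmin t) + eps t * ‖xmin t‖ ^ 2 / 2)
        + (1 / 2) * ‖(γ * Real.sqrt (eps t)) • (x t - xmin t) + deriv x t
            + β • ((lam t)⁻¹ • (x t - prox (lam t) (x t)))‖ ^ 2)
    : (∀ t, t₀ ≤ t → ‖x t - xmin t‖ ^ 2 ≤ 2 * E t / eps t) ∧
      (Tendsto (fun t => lam t * eps t) atTop (nhds 0) →
        Tendsto (fun t => E t / eps t) atTop (nhds 0) →
        Tendsto (fun t => ‖x t - xstar‖) atTop (nhds 0)) := by
  obtain ⟨z₀, hz₀⟩ := hSne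
  have hz₀S : ∀ y, Φ z₀ ≤ Φ y := by rw [hS] at hz₀; exact hz₀
  have hstar_le : ∀ y, (Φstar : EReal) ≤ Φ y := fun y => (hΦstar z₀ hz₀) ▸ hz₀S y
  -- finiteness of Φ at prox points
  have hfin : ∀ l : ℝ, 0 < l → ∀ v : H, ∃ r : ℝ, Φ (prox l v) = (r : EReal) := by
    intro l hl v
    have hne1 : Φ (prox l v) ≠ ⊥ := hnebot _
    have hne2 : Φ (prox l v) ≠ ⊤ := by
      intro htop
      have h := hprox l hl v z₀
      rw [htop, hΦstar z₀ hz₀, EReal.top_add_coe, ← EReal.coe_add] at h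
      exact absurd h (EReal.coe_lt_top _).not_ge
    exact ⟨(Φ (prox l v)).toReal, (EReal.coe_toReal hne2 hne1).symm⟩
  -- envelope upper bound
  have henv : ∀ l : ℝ, 0 < l → ∀ (v w : H) (rw' : ℝ), Φ w ≤ (rw' : EReal) →
      M l v ≤ rw' + (2*l)⁻¹ * ‖v - w‖^2 := by
    intro l hl v w rw' hw
    have h := hprox l hl v w
    rw [← hM l hl v] at h
    have h2 : (M l v : EReal) ≤ ((rw' + (2*l)⁻¹ * ‖v - w‖^2 : ℝ) : EReal) := by
      calc (M l v : EReal) ≤ Φ w + (((2*l)⁻¹*‖v-w‖^2 : ℝ) : EReal) := h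
        _ ≤ (rw' : EReal) + (((2*l)⁻¹*‖v-w‖^2 : ℝ) : EReal) := add_le_add_left hw _
        _ = _ := by rw [← EReal.coe_add]
    exact_mod_cast h2
  have hMval : ∀ l : ℝ, 0 < l → ∀ v : H, ∃ r : ℝ, Φ (prox l v) = (r:EReal) ∧
      M l v = r + (2*l)⁻¹ * ‖v - prox l v‖^2 ∧ Φstar ≤ r := by
    intro l hl v
    obtain ⟨r, hr⟩ := hfin l hl v
    refine ⟨r, hr, ?_, ?_⟩
    · have h := hM l hl v
      rw [hr, ← EReal.coe_add] at h
      exact_mod_cast h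
    · have h := hstar_le (prox l v)
      rw [hr] at h
      exact_mod_cast h
  -- convexity of the Moreau envelope
  have hMconv : ∀ l : ℝ, 0 < l → ∀ (a b : H) (θ : ℝ), 0 < θ → θ < 1 →
      M l (θ•a + (1-θ)•b) ≤ θ * M l a + (1-θ) * M l b := by
    intro l hl a b θ hθ0 hθ1
    obtain ⟨ra, hra, hMa, _⟩ := hMval l hl a
    obtain ⟨rb, hrb, hMb, _⟩ := hMval l hl b
    have hmix : Φ (θ • prox l a + (1-θ) • prox l b) ≤ ((θ*ra + (1-θ)*rb : ℝ) : EReal) := by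
      have h := hconv (prox l a) (prox l b) θ hθ0.le hθ1.le
      rw [hra, hrb] at h
      calc Φ _ ≤ _ := h
        _ = _ := by rw [← EReal.coe_mul, ← EReal.coe_mul, ← EReal.coe_add]
    have h1 := henv l hl (θ•a+(1-θ)•b) (θ • prox l a + (1-θ) • prox l b) _ hmix
    have hveq : (θ•a+(1-θ)•b) - (θ • prox l a + (1-θ) • prox l b)
        = θ•(a - prox l a) + (1-θ)•(b - prox l b) := by
      simp only [smul_sub]; abel
    rw [hveq] at h1
    have h2 : ‖θ•(a - prox l a)+(1-θ)•(b - prox l b)‖^2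
        ≤ θ*‖a - prox l a‖^2 + (1-θ)*‖b - prox l b‖^2 := by
      rw [norm_combo_sq]
      have : 0 ≤ θ * (1-θ) * ‖(a - prox l a) - (b - prox l b)‖^2 :=
        mul_nonneg (mul_nonneg hθ0.le (by linarith)) (by positivity)
      linarith
    have h2l : (0:ℝ) ≤ (2*l)⁻¹ := inv_nonneg.mpr (by linarith)
    have h3 := mul_le_mul_of_nonneg_left h2 h2l
    rw [hMa, hMb]
    nlinarith [h1, h3]
  -- strong convexity of φ at its minimizer
  have hφstrong : ∀ t, t₀ ≤ t → ∀ y : H,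
      M (lam t) (xmin t) + eps t * ‖xmin t‖^2/2 + eps t/2 * ‖y - xmin t‖^2 ≤
      M (lam t) y + eps t * ‖y‖^2/2 :=
    fun t ht y => strong_min (M (lam t)) (eps t) (heps_pos t ht)
      (fun a b θ h0 h1 => hMconv (lam t) (hlam_pos t ht) a b θ h0 h1) (xmin t) (hxmin t ht) y
  have part1 : ∀ t, t₀ ≤ t → ‖x t - xmin t‖ ^ 2 ≤ 2 * E t / eps t := by
    intro t ht
    have h1 := hφstrong t ht (x t)
    have hEt := hE t
    have hnn : (0:ℝ) ≤ (1/2) * ‖(γ * Real.sqrt (eps t)) • (x t - xmin t) + deriv x t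
            + β • ((lam t)⁻¹ • (x t - prox (lam t) (x t)))‖ ^ 2 := by positivity
    have heps := heps_pos t ht
    rw [le_div_iff₀ heps]
    nlinarith [h1, hnn]
  refine ⟨part1, ?_⟩
  intro hlelim hEelim
  -- strong convexity of Φ + (μ/2)‖·‖² at its minimizer  z = prox μ⁻¹ 0
  have hΨ : ∀ μ : ℝ, 0 < μ → ∀ rz : ℝ, Φ (prox μ⁻¹ 0) = (rz : EReal) →
      ∀ (y : H) (ry : ℝ), Φ y = (ry : EReal) →
      rz + μ/2*‖prox μ⁻¹ 0‖^2 + μ/2*‖y - prox μ⁻¹ 0‖^2 ≤ ry + μ/2*‖y‖^2 := by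
    intro μ hμ rz hrz y ry hry
    have hμinv : (0:ℝ) < μ⁻¹ := by positivity
    have h2inv : ((2*μ⁻¹)⁻¹ : ℝ) = μ/2 := by
      rw [mul_inv, inv_inv]; ring
    have hmin : ∀ (w : H) (rw' : ℝ), Φ w ≤ (rw' : EReal) →
        rz + μ/2*‖prox μ⁻¹ 0‖^2 ≤ rw' + μ/2*‖w‖^2 := by
      intro w rw' hw
      have h := hprox μ⁻¹ hμinv 0 w
      rw [hrz] at h
      simp only [zero_sub, norm_neg, h2inv] at h
      have h2 : ((rz + μ/2*‖prox μ⁻¹ 0‖^2 : ℝ) : EReal) ≤ ((rw' + μ/2*‖w‖^2 : ℝ) : EReal) := by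
        calc ((rz + μ/2*‖prox μ⁻¹ 0‖^2 : ℝ) : EReal)
            = (rz : EReal) + ((μ/2*‖prox μ⁻¹ 0‖^2 : ℝ) : EReal) := by rw [← EReal.coe_add]
          _ ≤ Φ w + ((μ/2*‖w‖^2 : ℝ) : EReal) := h
          _ ≤ (rw' : EReal) + ((μ/2*‖w‖^2 : ℝ) : EReal) := add_le_add_left hw _
          _ = _ := by rw [← EReal.coe_add]
      exact_mod_cast h2
    have key : μ/2*‖prox μ⁻¹ 0 - y‖^2
        ≤ (ry + μ/2*‖y‖^2) - (rz + μ/2*‖prox μ⁻¹ 0‖^2) := by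
      apply theta_le _ _ (by positivity)
      intro θ hθ0 hθ1
      have hmix : Φ (θ • prox μ⁻¹ 0 + (1-θ) • y) ≤ ((θ*rz + (1-θ)*ry : ℝ) : EReal) := by
        have h := hconv (prox μ⁻¹ 0) y θ hθ0.le hθ1.le
        rw [hrz, hry] at h
        calc Φ _ ≤ _ := h
          _ = _ := by rw [← EReal.coe_mul, ← EReal.coe_mul, ← EReal.coe_add]
      have h1 := hmin (θ • prox μ⁻¹ 0 + (1-θ) • y) _ hmix
      rw [norm_combo_sq (prox μ⁻¹ 0) y θ] at h1
      have h6 : 0 < 1-θ := by linarith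
      have h7 : (1-θ)*(θ*(μ/2*‖prox μ⁻¹ 0 - y‖^2)) ≤
          (1-θ)*((ry + μ/2*‖y‖^2) - (rz + μ/2*‖prox μ⁻¹ 0‖^2)) := by nlinarith [h1]
      exact (mul_le_mul_iff_right₀ h6).mp h7
    have hyz : ‖y - prox μ⁻¹ 0‖^2 = ‖prox μ⁻¹ 0 - y‖^2 := by rw [norm_sub_rev]
    rw [hyz]; linarith
  -- the regularization path
  obtain ⟨μf, hμf⟩ : ∃ f : ℝ → ℝ, ∀ t, f t = eps t / (1 + lam t * eps t) :=
    ⟨_, fun _ => rfl⟩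
  have hcpos : ∀ t, t₀ ≤ t → 0 < 1 + lam t * eps t := by
    intro t ht; nlinarith [hlam_pos t ht, heps_pos t ht]
  have hμpos : ∀ t, t₀ ≤ t → 0 < μf t := fun t ht => by
    rw [hμf t]; exact div_pos (heps_pos t ht) (hcpos t ht)
  obtain ⟨z, hzdef⟩ : ∃ f : ℝ → H, ∀ t, f t = prox (μf t)⁻¹ 0 := ⟨_, fun _ => rfl⟩
  have hrz' : ∀ t : ℝ, ∃ r : ℝ, t₀ ≤ t → Φ (z t) = (r : EReal) ∧ Φstar ≤ r := by
    intro t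
    by_cases ht : t₀ ≤ t
    · obtain ⟨r, hr⟩ := hfin (μf t)⁻¹ (by have := hμpos t ht; positivity) 0
      refine ⟨r, fun _ => ⟨by rw [hzdef t]; exact hr, ?_⟩⟩
      have h := hstar_le (z t)
      rw [hzdef t, hr] at h
      exact_mod_cast h
    · exact ⟨0, fun h => absurd h ht⟩
  choose rz hrzspec using hrz'
  have hΨt : ∀ t, t₀ ≤ t → ∀ (y : H) (ry : ℝ), Φ y = (ry:EReal) →
      rz t + μf t/2*‖z t‖^2 + μf t/2*‖y - z t‖^2 ≤ ry + μf t/2*‖y‖^2 :=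
    fun t ht y ry hy => by
      rw [hzdef t]
      exact hΨ (μf t) (hμpos t ht) (rz t) (by rw [← hzdef t]; exact (hrzspec t ht).1) y ry hy
  have hΦxstar : Φ xstar = (Φstar : EReal) := hΦstar xstar hxstar
  have hzb1 : ∀ t, t₀ ≤ t → ‖z t‖^2 + ‖xstar - z t‖^2 ≤ ‖xstar‖^2 := by
    intro t ht
    have h := hΨt t ht xstar Φstar hΦxstar
    have hs := (hrzspec t ht).2
    have hμ2 : (0:ℝ) < μf t/2 := by have := hμpos t ht; linarith
    have h5 : μf t/2 * (‖z t‖^2 + ‖xstar - z t‖^2) ≤ μf t/2 * ‖xstar‖^2 := by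
      ring_nf; ring_nf at h; linarith
    exact (mul_le_mul_iff_right₀ hμ2).mp h5
  have hzb2 : ∀ t, t₀ ≤ t → rz t ≤ Φstar + μf t/2*‖xstar‖^2 := by
    intro t ht
    have h := hΨt t ht xstar Φstar hΦxstar
    have hμ2 : (0:ℝ) < μf t/2 := by have := hμpos t ht; linarith
    have n1 : (0:ℝ) ≤ μf t/2 * ‖z t‖^2 := by positivity
    have n2 : (0:ℝ) ≤ μf t/2 * ‖xstar - z t‖^2 := by positivity
    nlinarith [h]
  have hznorm : ∀ t, t₀ ≤ t → ‖z t‖ ≤ ‖xstar‖ := by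
    intro t ht
    have h := hzb1 t ht
    have h2 : ‖z t‖^2 ≤ ‖xstar‖^2 := by nlinarith [sq_nonneg ‖xstar - z t‖, norm_nonneg (xstar - z t)]
    nlinarith [norm_nonneg (z t), norm_nonneg xstar]
  -- pairwise comparison
  have hpair : ∀ s t, t₀ ≤ s → t₀ ≤ t →
      (μf s + μf t)/2 * ‖z s - z t‖^2 ≤ (μf s - μf t)/2 * (‖z t‖^2 - ‖z s‖^2) := by
    intro s t hs ht
    have h1 := hΨt s hs (z t) (rz t) ((hrzspec t ht).1)
    have h2 := hΨt t ht (z s) (rz s) ((hrzspec s hs).1)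
    rw [norm_sub_rev (z t) (z s)] at h1
    linarith [h1, h2]
  have hμanti : ∀ s t, t₀ ≤ s → s ≤ t → μf t ≤ μf s := by
    intro s t hs hst
    have ht := hs.trans hst
    have h1 := heps_anti s t hs hst
    have h2 := hlam_mono s t hs hst
    have he1 := heps_pos s hs
    have he2 := heps_pos t ht
    have hl1 := hlam_pos s hs
    rw [hμf s, hμf t, div_le_div_iff₀ (hcpos t ht) (hcpos s hs)]
    have h3 := mul_le_mul_of_nonneg_right (mul_le_mul_of_nonneg_right h2 he2.le) he1.le
    nlinarith [h3]
  have hgmono : ∀ s t, t₀ ≤ s → s ≤ t → ‖z s‖^2 ≤ ‖z t‖^2 := by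
    intro s t hs hst
    have ht := hs.trans hst
    rcases eq_or_lt_of_le (hμanti s t hs hst) with heq | hlt
    · have hzz : z t = z s := by rw [hzdef t, hzdef s, heq]
      rw [hzz]
    · have h := hpair s t hs ht
      by_contra hcon
      push_neg at hcon
      have hns : (0:ℝ) ≤ (μf s + μf t)/2 * ‖z s - z t‖^2 := by
        have := hμpos s hs; have := hμpos t ht; positivity
      have hneg : (μf s - μf t)/2 * (‖z t‖^2 - ‖z s‖^2) < 0 :=
        mul_neg_of_pos_of_neg (by linarith) (by linarith)
      linarith [h, hns, hneg]
  have hpair2' : ∀ s t, t₀ ≤ s → t₀ ≤ t → s ≤ t →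
      ‖z s - z t‖^2 ≤ ‖z t‖^2 - ‖z s‖^2 := by
    intro s t hs ht hst
    have hp := hpair s t hs ht
    have hg := hgmono s t hs hst
    have hμ := hμanti s t hs hst
    have hsum : (0:ℝ) < (μf s + μf t)/2 := by
      have := hμpos s hs; have := hμpos t ht; linarith
    have h9 : (0:ℝ) ≤ μf t * (‖z t‖^2 - ‖z s‖^2) := mul_nonneg (hμpos t ht).le (by linarith)
    have h10 : (μf s + μf t)/2 * ‖z s - z t‖^2 ≤ (μf s + μf t)/2 * (‖z t‖^2 - ‖z s‖^2) := by
      nlinarith [hp, h9]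
    exact (mul_le_mul_iff_right₀ hsum).mp h10
  have hpair2 : ∀ s t, t₀ ≤ s → t₀ ≤ t → ‖z s - z t‖^2 ≤ |‖z s‖^2 - ‖z t‖^2| := by
    intro s t hs ht
    rcases le_total s t with h | h
    · have := hpair2' s t hs ht h
      have habs : |‖z s‖^2 - ‖z t‖^2| = ‖z t‖^2 - ‖z s‖^2 := by
        rw [abs_sub_comm, abs_of_nonneg (by linarith [hgmono s t hs h])]
      rw [habs]; exact this
    · have := hpair2' t s ht hs h
      have habs : |‖z s‖^2 - ‖z t‖^2| = ‖z s‖^2 - ‖z t‖^2 :=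
        abs_of_nonneg (by linarith [hgmono t s ht h])
      rw [norm_sub_rev, habs]; exact this
  -- monotone convergence of ‖z‖²  and Cauchy property
  set g : ℝ → ℝ := fun t => ‖z (max t t₀)‖^2 with hgdef
  have hgm : Monotone g := by
    intro s t hst
    exact hgmono (max s t₀) (max t t₀) (le_max_right _ _) (max_le_max hst (le_refl t₀))
  have hgbdd : BddAbove (Set.range g) := by
    refine ⟨‖xstar‖^2, ?_⟩
    rintro _ ⟨t, rfl⟩
    have h := hznorm (max t t₀) (le_max_right _ _)
    exact pow_le_pow_left₀ (norm_nonneg _) h 2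
  have hgtend : Tendsto g atTop (nhds (⨆ t, g t)) := tendsto_atTop_ciSup hgm hgbdd
  have hcz : CauchySeq (fun t => z (max t t₀)) := by
    rw [Metric.cauchySeq_iff]
    intro ε hε
    obtain ⟨N, hN⟩ := Metric.tendsto_atTop.mp hgtend (ε^2/2) (by positivity)
    refine ⟨N, fun m hm n hn => ?_⟩
    have h1 := hN m hm
    have h2 := hN n hn
    rw [Real.dist_eq] at h1 h2
    have hp2 := hpair2 (max m t₀) (max n t₀) (le_max_right _ _) (le_max_right _ _)
    have habs : |g m - g n| ≤ |g m - (⨆ t, g t)| + |g n - (⨆ t, g t)| := by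
      have := abs_sub_le (g m) (⨆ t, g t) (g n)
      rw [abs_sub_comm (⨆ t, g t) (g n)] at this
      exact this
    have hlt : ‖z (max m t₀) - z (max n t₀)‖^2 < ε^2 := by
      have : |‖z (max m t₀)‖^2 - ‖z (max n t₀)‖^2| = |g m - g n| := rfl
      rw [this] at hp2
      calc ‖z (max m t₀) - z (max n t₀)‖^2 ≤ |g m - g n| := hp2
        _ ≤ |g m - (⨆ t, g t)| + |g n - (⨆ t, g t)| := habs
        _ < ε^2/2 + ε^2/2 := by exact add_lt_add h1 h2
        _ = ε^2 := by ring
    rw [dist_eq_norm]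
    nlinarith [norm_nonneg (z (max m t₀) - z (max n t₀)), hε]
  obtain ⟨zbar, hzbar⟩ := cauchySeq_tendsto_of_complete hcz
  have hztend : Tendsto z atTop (nhds zbar) := by
    apply hzbar.congr'
    filter_upwards [eventually_ge_atTop t₀] with t ht
    rw [max_eq_left ht]
  -- μf tends to zero
  have hμtend : Tendsto μf atTop (nhds 0) := by
    apply squeeze_zero' (g := eps)
    · filter_upwards [eventually_ge_atTop t₀] with t ht
      exact (hμpos t ht).le
    · filter_upwards [eventually_ge_atTop t₀] with t ht
      rw [hμf t]
      apply div_le_self (heps_pos t ht).le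
      nlinarith [hlam_pos t ht, heps_pos t ht]
    · exact heps_lim
  -- zbar is a minimizer of Φ
  have hΦzbar : Φ zbar ≤ (Φstar : EReal) := by
    by_contra hgt
    push_neg at hgt
    obtain ⟨b, hb1, hb2⟩ := exists_between hgt
    have hbt : b ≠ ⊤ := hb2.ne_top
    have hbb : b ≠ ⊥ := ne_bot_of_gt hb1
    obtain ⟨br, rfl⟩ : ∃ r : ℝ, b = (r : EReal) := ⟨b.toReal, (EReal.coe_toReal hbt hbb).symm⟩
    have hev : ∀ᶠ w in nhds zbar, (br : EReal) < Φ w := hlsc zbar (br : EReal) hb2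
    have hev2 : ∀ᶠ t in atTop, (br : EReal) < Φ (z t) := hztend.eventually hev
    have hbr : Φstar < br := by exact_mod_cast hb1
    have hco : Tendsto (fun t => Φstar + μf t/2 * ‖xstar‖^2) atTop (nhds Φstar) := by
      have h := ((hμtend.div_const 2).mul_const (‖xstar‖^2)).const_add Φstar
      simpa using h
    have hlt' : ∀ᶠ t in atTop, Φstar + μf t/2*‖xstar‖^2 < br :=
      hco.eventually (eventually_lt_nhds hbr)
    obtain ⟨t, ht1, ht2, ht3⟩ := (hev2.and (hlt'.and (eventually_ge_atTop t₀))).exists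
    have heq := (hrzspec t ht3).1
    rw [heq] at ht1
    have : br < rz t := by exact_mod_cast ht1
    have := hzb2 t ht3
    linarith
  have hzbarS : zbar ∈ S := by
    rw [hS]; exact fun y => le_trans hΦzbar (hstar_le y)
  have hzbar_eq : zbar = xstar := by
    have hf1 : Tendsto (fun t => ‖z t‖^2 + ‖xstar - z t‖^2) atTop
        (nhds (‖zbar‖^2 + ‖xstar - zbar‖^2)) := by
      apply Tendsto.add
      · exact (hztend.norm).pow 2
      · exact ((tendsto_const_nhds.sub hztend).norm).pow 2
    have h1 : ‖zbar‖^2 + ‖xstar - zbar‖^2 ≤ ‖xstar‖^2 := by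
      apply le_of_tendsto hf1
      filter_upwards [eventually_ge_atTop t₀] with t ht
      exact hzb1 t ht
    have h2 : ‖xstar‖ ≤ ‖zbar‖ := hxstar_min zbar hzbarS
    have h3 : ‖xstar - zbar‖^2 ≤ 0 := by nlinarith [norm_nonneg zbar, norm_nonneg xstar]
    have h4 : xstar - zbar = 0 := by
      have h5 : ‖xstar - zbar‖ = 0 := by nlinarith [norm_nonneg (xstar - zbar)]
      exact norm_eq_zero.mp h5
    have := sub_eq_zero.mp h4
    exact this.symm
  -- the minimizer identity
  have hxmin_eq : ∀ t, t₀ ≤ t → xmin t = (1 + lam t * eps t)⁻¹ • z t := by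
    intro t ht
    have hlp := hlam_pos t ht
    have hep := heps_pos t ht
    have hwmin : ∀ y : H, M (lam t) ((1 + lam t * eps t)⁻¹ • z t)
        + eps t * ‖(1 + lam t * eps t)⁻¹ • z t‖^2/2
        ≤ M (lam t) y + eps t * ‖y‖^2/2 := by
      intro y
      obtain ⟨rp, hrp, hMy, _⟩ := hMval (lam t) hlp y
      have hw_ub := henv (lam t) hlp ((1 + lam t * eps t)⁻¹ • z t) (z t) (rz t)
        (le_of_eq (hrzspec t ht).1)
      have hlb := hΨt t ht (prox (lam t) y) rp hrp
      have hki := key_ineq (lam t) (eps t) hlp hep (z t) (prox (lam t) y) y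
      rw [hμf t] at hlb
      rw [hMy]
      linarith [hw_ub, hlb, hki]
    have h1 := hφstrong t ht ((1 + lam t * eps t)⁻¹ • z t)
    have h2 := hwmin (xmin t)
    have h3 : ‖(1 + lam t * eps t)⁻¹ • z t - xmin t‖^2 ≤ 0 := by nlinarith [h1, h2, hep]
    have h4 : (1 + lam t * eps t)⁻¹ • z t - xmin t = 0 := by
      have h5 : ‖(1 + lam t * eps t)⁻¹ • z t - xmin t‖ = 0 := by
        nlinarith [norm_nonneg ((1 + lam t * eps t)⁻¹ • z t - xmin t)]
      exact norm_eq_zero.mp h5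
    exact (sub_eq_zero.mp h4).symm
  -- convergence of xmin to xstar
  have hztend' : Tendsto (fun t => ‖z t - xstar‖) atTop (nhds 0) := by
    rw [← hzbar_eq]
    have h := hztend.sub (tendsto_const_nhds (x := zbar))
    rw [sub_self] at h
    simpa using h.norm
  have hxmin_tend : Tendsto (fun t => ‖xmin t - xstar‖) atTop (nhds 0) := by
    apply squeeze_zero' (g := fun t => lam t * eps t * ‖xstar‖ + ‖z t - xstar‖)
    · filter_upwards with t; positivity
    · filter_upwards [eventually_ge_atTop t₀] with t ht
      have hc := hcpos t ht
      rw [hxmin_eq t ht]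
      have htri : ‖(1 + lam t * eps t)⁻¹ • z t - xstar‖
          ≤ ‖(1 + lam t * eps t)⁻¹ • z t - z t‖ + ‖z t - xstar‖ := by
        have := norm_sub_le_norm_sub_add_norm_sub ((1 + lam t * eps t)⁻¹ • z t) (z t) xstar
        exact this
      have hsm : ‖(1 + lam t * eps t)⁻¹ • z t - z t‖ ≤ lam t * eps t * ‖xstar‖ := by
        rw [show (1 + lam t * eps t)⁻¹ • z t - z t = ((1 + lam t * eps t)⁻¹ - 1) • z t by
          rw [sub_smul, one_smul], norm_smul, Real.norm_eq_abs]
        have habs : |(1 + lam t * eps t)⁻¹ - 1| ≤ lam t * eps t := by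
          have hinv : (1 + lam t * eps t)⁻¹ * (1 + lam t * eps t) = 1 :=
            inv_mul_cancel₀ (ne_of_gt hc)
          have h8 : (0:ℝ) < (1 + lam t * eps t)⁻¹ := by positivity
          have h7 : (1 + lam t * eps t)⁻¹ ≤ 1 := by nlinarith [hlam_pos t ht, heps_pos t ht]
          rw [abs_sub_comm, abs_of_nonneg (by linarith)]
          nlinarith [hinv, sq_nonneg (lam t * eps t), mul_pos (hlam_pos t ht) (heps_pos t ht)]
        exact mul_le_mul habs (hznorm t ht) (norm_nonneg _)
          (by nlinarith [hlam_pos t ht, heps_pos t ht])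
      linarith
    · have h := (hlelim.mul_const (‖xstar‖)).add hztend'
      simpa using h
  -- final squeeze
  apply squeeze_zero' (g := fun t => Real.sqrt (2*(E t/eps t)) + ‖xmin t - xstar‖)
  · filter_upwards with t; positivity
  · filter_upwards [eventually_ge_atTop t₀] with t ht
    have htri : ‖x t - xstar‖ ≤ ‖x t - xmin t‖ + ‖xmin t - xstar‖ :=
      norm_sub_le_norm_sub_add_norm_sub (x t) (xmin t) xstar
    have hp := part1 t ht
    have hnn2 : (0:ℝ) ≤ 2*E t/eps t := le_trans (sq_nonneg _) hp
    have hsq : ‖x t - xmin t‖ ≤ Real.sqrt (2*(E t/eps t)) := by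
      rw [show (2*(E t/eps t) : ℝ) = 2*E t/eps t by ring]
      rw [Real.le_sqrt (norm_nonneg _) hnn2]
      exact hp
    linarith
  · have hs : Tendsto (fun t => Real.sqrt (2*(E t/eps t))) atTop (nhds 0) := by
      have h2 : Tendsto (fun t => 2*(E t/eps t)) atTop (nhds 0) := by
        have := hEelim.const_mul 2
        simpa using this
      have h3 := h2.sqrt
      rwa [Real.sqrt_zero] at h3
    have := hs.add hxmin_tend
    simpa using this
end
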